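/- Let s ∈ [0,1) and t ∈ {1,2}. Then there exists a constant C > 0 such that for all α ∈ (0, 1/e) and all x, y ∈ ℝ² with ln‖x−y‖ ≥ |ln α|^{1/2}, one has |G(x,y;α) − g(α)|^t ≤ C·|ln α|^{t−s}·(ln‖x−y‖)^s. -/

import Mathlib

open MeasureTheory

/-- The modified Bessel function of the second kind of order zero,
via its integral representation `K₀(w) = ∫₀^∞ exp(−w·cosh t) dt`. -/
noncomputable def K0 (w : ℝ) : ℝ := ∫ t in Set.Ioi (0 : ℝ), Real.exp (-w * Real.cosh t)

/-- The Green's function of the free resolvent `(-Δ + α²)⁻¹` in two dimensions: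
`G(x,y;α) = (1/(2π))·K₀(α‖x−y‖)`. -/
noncomputable def G (x y : EuclideanSpace ℝ (Fin 2)) (α : ℝ) : ℝ :=
  (1 / (2 * Real.pi)) * K0 (α * ‖x - y‖)

/-- The function `g(α) = −(ln α)/(2π)`. -/
noncomputable def g (α : ℝ) : ℝ := -(Real.log α) / (2 * Real.pi)

section aux

open Real Set

lemma half_exp_le_cosh (t : ℝ) : exp t / 2 ≤ cosh t := by
  rw [Real.cosh_eq]
  have := (Real.exp_pos (-t)).le
  linarith

lemma cosh_le_exp_of_nonneg {t : ℝ} (ht : 0 ≤ t) : cosh t ≤ exp t := by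
  rw [Real.cosh_eq]
  have : exp (-t) ≤ exp t := Real.exp_le_exp.2 (by linarith)
  linarith

lemma K0_integrableOn {w : ℝ} (hw : 0 < w) :
    IntegrableOn (fun t => Real.exp (-w * Real.cosh t)) (Set.Ioi (0 : ℝ)) := by
  have h := exp_neg_integrableOn_Ioi (0 : ℝ) (show 0 < w / 2 by linarith)
  refine h.mono' ?_ ?_
  · exact (Real.continuous_exp.comp ((continuous_const.mul Real.continuous_cosh))).aestronglyMeasurable
  · filter_upwards [ae_restrict_mem measurableSet_Ioi] with t ht
    have h1 : t / 2 ≤ cosh t := by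
      have h2 := half_exp_le_cosh t
      have h3 : t + 1 ≤ exp t := Real.add_one_le_exp t
      linarith
    rw [Real.norm_eq_abs, Real.abs_exp]
    apply Real.exp_le_exp.2
    have : w * (t / 2) ≤ w * cosh t := by
      exact mul_le_mul_of_nonneg_left h1 hw.le
    nlinarith

lemma K0_nonneg {w : ℝ} (hw : 0 < w) : 0 ≤ K0 w := by
  apply setIntegral_nonneg measurableSet_Ioi
  intro t _
  exact (Real.exp_pos _).le

lemma K0_le {w : ℝ} (hw : 0 < w) : K0 w ≤ max 0 (Real.log (2 / w)) + 1 := by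
  set T : ℝ := max 0 (Real.log (2 / w)) with hT
  have hT0 : 0 ≤ T := le_max_left _ _
  have hsplit : Set.Ioc (0:ℝ) T ∪ Set.Ioi T = Set.Ioi (0:ℝ) := Set.Ioc_union_Ioi_eq_Ioi hT0
  have hint := K0_integrableOn hw
  have hint1 : IntegrableOn (fun t => Real.exp (-w * Real.cosh t)) (Set.Ioc (0:ℝ) T) :=
    hint.mono_set (by rw [← hsplit]; exact Set.subset_union_left)
  have hint2 : IntegrableOn (fun t => Real.exp (-w * Real.cosh t)) (Set.Ioi T) :=
    hint.mono_set (by rw [← hsplit]; exact Set.subset_union_right)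
  have heq : K0 w = (∫ t in Set.Ioc (0:ℝ) T, Real.exp (-w * Real.cosh t))
      + ∫ t in Set.Ioi T, Real.exp (-w * Real.cosh t) := by
    rw [K0, ← hsplit, setIntegral_union Set.Ioc_disjoint_Ioi_same measurableSet_Ioi hint1 hint2]
  have hb1 : (∫ t in Set.Ioc (0:ℝ) T, Real.exp (-w * Real.cosh t)) ≤ T := by
    have : (∫ t in Set.Ioc (0:ℝ) T, Real.exp (-w * Real.cosh t))
        ≤ ∫ _t in Set.Ioc (0:ℝ) T, (1:ℝ) := by
      apply setIntegral_mono_on hint1 (integrableOn_const (by simp) (by simp))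
        measurableSet_Ioc
      intro u _
      rw [← Real.exp_zero]
      apply Real.exp_le_exp.2
      have := Real.one_le_cosh u
      nlinarith
    have h' := this
    simp [Real.volume_Ioc, ENNReal.toReal_ofReal hT0] at h' ⊢
    rcases h' with h' | h' <;> linarith
  have hb2 : (∫ t in Set.Ioi T, Real.exp (-w * Real.cosh t)) ≤ 1 := by
    have hmaj : (∫ t in Set.Ioi T, Real.exp (-w * Real.cosh t))
        ≤ ∫ t in Set.Ioi T, Real.exp (T - 1) * Real.exp (-t) := by
      apply setIntegral_mono_on hint2 ?_ measurableSet_Ioi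
      · intro u hu
        rw [← Real.exp_add]
        apply Real.exp_le_exp.2
        -- need: -w * cosh u ≤ T - 1 - u
        have h1 : Real.exp u / 2 ≤ Real.cosh u := half_exp_le_cosh u
        have h2 : Real.exp (u - T) ≤ w * Real.exp u / 2 := by
          have hlog : Real.log (2 / w) ≤ T := le_max_right _ _
          have he : Real.exp (u - Real.log (2/w)) = w * Real.exp u / 2 := by
            rw [Real.exp_sub, Real.exp_log (show (0:ℝ) < 2 / w by positivity)]
            field_simp
          calc Real.exp (u - T) ≤ Real.exp (u - Real.log (2/w)) :=
                Real.exp_le_exp.2 (by linarith)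
            _ = _ := he
        have h3 : u - T + 1 ≤ Real.exp (u - T) := Real.add_one_le_exp _
        have h4 : w * Real.exp u / 2 ≤ w * Real.cosh u :=
          by rw [mul_div_assoc]; exact mul_le_mul_of_nonneg_left h1 hw.le
        linarith
      · have := (exp_neg_integrableOn_Ioi T zero_lt_one).const_mul (Real.exp (T-1))
        simpa [IntegrableOn] using this
    have hcalc : (∫ t in Set.Ioi T, Real.exp (T - 1) * Real.exp (-t))
        = Real.exp (T - 1) * Real.exp (-T) := by
      rw [integral_const_mul, integral_exp_neg_Ioi]
    calc (∫ t in Set.Ioi T, Real.exp (-w * Real.cosh t)) ≤ _ := hmaj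
      _ = Real.exp (T - 1) * Real.exp (-T) := hcalc
      _ = Real.exp (-1) := by rw [← Real.exp_add]; ring_nf
      _ ≤ 1 := by rw [← Real.exp_zero]; exact Real.exp_le_exp.2 (by norm_num)
  linarith [heq, hb1, hb2]

end aux

section aux2
open Real Set

lemma K0_ge {w : ℝ} (hw : 0 < w) (hw1 : w ≤ 1) : Real.log (1/w) - 1 ≤ K0 w := by
  set L : ℝ := Real.log (1/w) with hLdef
  have hexpL : Real.exp L = 1/w := Real.exp_log (by positivity)
  have hL0 : 0 ≤ L := Real.log_nonneg (by rw [le_div_iff₀ hw]; linarith)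
  have hsplit : Set.Ioc (0:ℝ) L ∪ Set.Ioi L = Set.Ioi (0:ℝ) := Set.Ioc_union_Ioi_eq_Ioi hL0
  have hint := K0_integrableOn hw
  have hint1 : IntegrableOn (fun t => Real.exp (-w * Real.cosh t)) (Set.Ioc (0:ℝ) L) :=
    hint.mono_set (by rw [← hsplit]; exact Set.subset_union_left)
  have hint2 : IntegrableOn (fun t => Real.exp (-w * Real.cosh t)) (Set.Ioi L) :=
    hint.mono_set (by rw [← hsplit]; exact Set.subset_union_right)
  have heq : K0 w = (∫ t in Set.Ioc (0:ℝ) L, Real.exp (-w * Real.cosh t))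
      + ∫ t in Set.Ioi L, Real.exp (-w * Real.cosh t) := by
    rw [K0, ← hsplit, setIntegral_union Set.Ioc_disjoint_Ioi_same measurableSet_Ioi hint1 hint2]
  have h2 : 0 ≤ ∫ t in Set.Ioi L, Real.exp (-w * Real.cosh t) :=
    setIntegral_nonneg measurableSet_Ioi (fun t _ => (Real.exp_pos _).le)
  have h1 : L - 1 ≤ ∫ t in Set.Ioc (0:ℝ) L, Real.exp (-w * Real.cosh t) := by
    have hcont : Continuous (fun t : ℝ => 1 - w * Real.exp t) :=
      continuous_const.sub (continuous_const.mul Real.continuous_exp)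
    have hmin : (∫ t in Set.Ioc (0:ℝ) L, (1 - w * Real.exp t))
        ≤ ∫ t in Set.Ioc (0:ℝ) L, Real.exp (-w * Real.cosh t) := by
      apply setIntegral_mono_on (hcont.integrableOn_Ioc) hint1 measurableSet_Ioc
      intro u hu
      have hc : Real.cosh u ≤ Real.exp u := cosh_le_exp_of_nonneg hu.1.le
      have ha : -(w * Real.exp u) + 1 ≤ Real.exp (-(w * Real.exp u)) :=
        Real.add_one_le_exp _
      have hb : Real.exp (-(w * Real.exp u)) ≤ Real.exp (-w * Real.cosh u) := by
        apply Real.exp_le_exp.2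
        have := mul_le_mul_of_nonneg_left hc hw.le
        linarith
      linarith
    have hval : (∫ t in Set.Ioc (0:ℝ) L, (1 - w * Real.exp t)) = L - w * (Real.exp L - 1) := by
      rw [← intervalIntegral.integral_of_le hL0]
      rw [intervalIntegral.integral_sub intervalIntegrable_const
        ((Real.continuous_exp.intervalIntegrable _ _).const_mul w),
        intervalIntegral.integral_const, intervalIntegral.integral_const_mul,
        integral_exp]
      simp
    rw [hval, hexpL] at hmin
    have : w * (1/w - 1) = 1 - w := by field_simp
    rw [this] at hmin
    linarith
  linarith

end aux2

/-- For `s ∈ [0,1)` and `t ∈ {1,2}` there is `C > 0` such that for all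
`α ∈ (0,1/e)` and all `x, y ∈ ℝ²` with `ln‖x−y‖ ≥ |ln α|^{1/2}`:
`|G(x,y;α) − g(α)|^t ≤ C·|ln α|^{t−s}·(ln‖x−y‖)^s`. -/
theorem far_region_pointwise_bound (s t : ℝ) (hs : s ∈ Set.Ico (0 : ℝ) 1)
    (ht : t = 1 ∨ t = 2) :
    ∃ C : ℝ, 0 < C ∧ ∀ α : ℝ, α ∈ Set.Ioo (0 : ℝ) (Real.exp 1)⁻¹ →
      ∀ x y : EuclideanSpace ℝ (Fin 2),
        Real.sqrt |Real.log α| ≤ Real.log ‖x - y‖ →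
        |G x y α - g α| ^ t ≤
          C * |Real.log α| ^ (t - s) * (Real.log ‖x - y‖) ^ s := by
  obtain ⟨hs0, hs1⟩ := hs
  have ht1 : 1 ≤ t := by rcases ht with h | h <;> rw [h] <;> norm_num
  refine ⟨1, one_pos, ?_⟩
  rintro α ⟨hα0, hα1⟩ x y hxy
  set r : ℝ := ‖x - y‖ with hrdef
  -- basic facts
  have hlogα : Real.log α < -1 := by
    have h := Real.log_lt_log hα0 hα1
    rwa [Real.log_inv, Real.log_exp] at h
  have habs : |Real.log α| = -Real.log α := abs_of_neg (by linarith)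
  have h1α : 1 < |Real.log α| := by rw [habs]; linarith
  have hlr1 : 1 ≤ Real.log r := le_trans (Real.one_le_sqrt.2 h1α.le) hxy
  have hr1 : 1 < r := by
    by_contra h
    push_neg at h
    have := Real.log_nonpos (norm_nonneg _) h
    linarith
  have hr0 : 0 < r := lt_trans one_pos hr1
  have hw0 : 0 < α * r := mul_pos hα0 hr0
  have hlogw : Real.log (α * r) = Real.log α + Real.log r :=
    Real.log_mul hα0.ne' hr0.ne'
  set m : ℝ := min |Real.log α| (Real.log r) with hmdef
  have hm1 : 1 ≤ m := le_min h1α.le hlr1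
  have hm0 : 0 < m := lt_of_lt_of_le one_pos hm1
  -- key bound
  have hkey : |K0 (α * r) + Real.log α| ≤ 3 * m := by
    rcases le_or_gt (α * r) 1 with hle | hgt
    · -- small w: m = log r
      have hlw : Real.log (α * r) ≤ 0 := Real.log_nonpos hw0.le hle
      have hmr : m = Real.log r := min_eq_right (by rw [habs]; linarith [hlogw ▸ hlw])
      have hlow := K0_ge hw0 hle
      have hup := K0_le hw0
      have hlog1w : Real.log (1/(α*r)) = -(Real.log α + Real.log r) := by
        rw [one_div, Real.log_inv, hlogw]
      have hlog2w : Real.log (2/(α*r)) = Real.log 2 - (Real.log α + Real.log r) := by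
        rw [div_eq_mul_inv, Real.log_mul two_ne_zero (by positivity), Real.log_inv, hlogw]
        ring
      have hmax : max 0 (Real.log (2/(α*r))) = Real.log 2 - (Real.log α + Real.log r) := by
        rw [hlog2w]
        apply max_eq_right
        have := Real.log_nonneg (show (1:ℝ) ≤ 2 by norm_num)
        linarith [hlogw ▸ hlw]
      rw [hlog1w] at hlow
      rw [hmax] at hup
      have hlog2 : Real.log 2 ≤ 1 := by
        rw [← Real.log_exp 1]
        apply Real.log_le_log two_pos
        have := Real.add_one_le_exp (1:ℝ)
        linarith
      rw [hmr, abs_le]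
      constructor <;> [linarith; linarith]
    · -- large w: m = |log α|
      have hlw : 0 < Real.log (α * r) := Real.log_pos hgt
      have hmα : m = |Real.log α| := min_eq_left (by rw [habs]; linarith [hlogw ▸ hlw])
      have hlow := K0_nonneg hw0
      have hup := K0_le hw0
      have hmax : max 0 (Real.log (2/(α*r))) ≤ Real.log 2 := by
        apply max_le (Real.log_nonneg (by norm_num))
        apply Real.log_le_log (by positivity)
        rw [div_le_iff₀ hw0]
        nlinarith
      have hlog2 : Real.log 2 ≤ 1 := by
        rw [← Real.log_exp 1]
        apply Real.log_le_log two_pos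
        have := Real.add_one_le_exp (1:ℝ)
        linarith
      rw [hmα, habs, abs_le]
      constructor <;> [linarith; linarith]
  -- bound on |G - g|
  have hGg : |G x y α - g α| ≤ m := by
    have hpi : 3 < Real.pi := Real.pi_gt_three
    have hGeq : G x y α - g α = (K0 (α * r) + Real.log α) / (2 * Real.pi) := by
      rw [G, g]
      field_simp
      rw [← hrdef]; ring
    rw [hGeq, abs_div, abs_of_pos (by positivity : (0:ℝ) < 2 * Real.pi)]
    rw [div_le_iff₀ (by positivity)]
    nlinarith [hkey, hm0]
  -- conclude with rpow manipulations
  have hstep1 : |G x y α - g α| ^ t ≤ m ^ t :=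
    Real.rpow_le_rpow (abs_nonneg _) hGg (by linarith)
  have hstep2 : m ^ t = m ^ (t - s) * m ^ s := by
    rw [← Real.rpow_add hm0]
    ring_nf
  have hstep3 : m ^ (t - s) ≤ |Real.log α| ^ (t - s) :=
    Real.rpow_le_rpow hm0.le (min_le_left _ _) (by linarith)
  have hstep4 : m ^ s ≤ (Real.log r) ^ s :=
    Real.rpow_le_rpow hm0.le (min_le_right _ _) hs0
  calc |G x y α - g α| ^ t ≤ m ^ t := hstep1
    _ = m ^ (t - s) * m ^ s := hstep2
    _ ≤ |Real.log α| ^ (t - s) * (Real.log r) ^ s := by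
        apply mul_le_mul hstep3 hstep4 (Real.rpow_nonneg hm0.le _)
          (Real.rpow_nonneg (abs_nonneg _) _)
    _ = 1 * |Real.log α| ^ (t - s) * (Real.log r) ^ s := by ring
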